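/- (Proposition 1, rate bound for the variable-length encoder.) Let t ≥ 1, let B be a finite nonempty set of unit vectors in ℂ^t, let P ≥ 1, set β = (t+1)·log P, and let E = {h ∈ ℂ^t : ∃x ∈ B, |⟨x, h⟩|²·P < β}. Then μ(ℂ^t \ E)·1 + μ(E)·(1 + ⌈log₂ |B|⌉) ≤ 1 + (t+1)·|B|·log₂(4·|B|)·(log P)/P. (In particular, μ(E) ≤ |B|·(1 − exp(−β/P)) ≤ |B|·β/P by a union bound.) -/

import Mathlib

open MeasureTheory

noncomputable instance (t : ℕ) : MeasureSpace (EuclideanSpace ℂ (Fin t)) :=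
  MeasureSpace.mk (toMeasurableSpace := inferInstance)
    (Measure.map (MeasurableEquiv.toLp 2 (Fin t → ℂ)) (volume : Measure (Fin t → ℂ)))

/-- The Gaussian tail function `Q(x) = (1/√(2π)) ∫_x^∞ exp(-u²/2) du`. -/
noncomputable def gaussianQ (x : ℝ) : ℝ :=
  (Real.sqrt (2 * Real.pi))⁻¹ * ∫ u in Set.Ioi x, Real.exp (-(u ^ 2) / 2)

/-- The standard complex Gaussian measure `CN(0, I_t)` on `ℂ^t`, with density
`h ↦ π^{-t} exp(-‖h‖²)` with respect to Lebesgue measure. -/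
noncomputable def stdCGauss (t : ℕ) : Measure (EuclideanSpace ℂ (Fin t)) :=
  volume.withDensity fun h => ENNReal.ofReal ((Real.pi ^ t)⁻¹ * Real.exp (-‖h‖ ^ 2))

/-!
The expected rate is `1 + μ(E) ⌈log₂ |B|⌉`, so everything rests on a union bound for `μ(E)`.
The density of `CN(0, I_t)` is radial and Lebesgue measure is invariant under unitary maps, so for
a unit vector `x` the law of `⟨x, h⟩` is that of one coordinate, namely `CN(0, 1)` on `ℂ`. Its
density is at most `1/π`, hence `μ {h | |⟨x, h⟩|² < c} ≤ c`. With `c = β / P` this gives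
`μ(E) ≤ |B| β / P`, and `⌈log₂ |B|⌉ ≤ log₂ (4 |B|)` finishes the estimate.
-/

open Real
open scoped ENNReal

theorem LinearIsometryEquiv.measurePreserving_of_isAddHaarMeasure
    {𝕜 E : Type*} [Semiring 𝕜] [NormedAddCommGroup E] [Module 𝕜 E] [ProperSpace E]
    [MeasurableSpace E] [BorelSpace E] (μ : Measure E) [μ.IsAddHaarMeasure] (U : E ≃ₗᵢ[𝕜] E) :
    MeasurePreserving U μ μ := by
  refine ⟨U.continuous.measurable, ?_⟩
  have : (μ.map U).IsAddHaarMeasure :=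
    (U.toLinearEquiv.toAddEquiv).isAddHaarMeasure_map μ U.continuous U.symm.continuous
  let K : TopologicalSpace.PositiveCompacts E := ⟨⟨Metric.closedBall 0 1, isCompact_closedBall 0 1⟩,
    (Metric.nonempty_ball.2 one_pos).mono Metric.ball_subset_interior_closedBall⟩
  rw [Measure.addHaarMeasure_unique (μ.map U) K,
    Measure.map_apply U.continuous.measurable K.isCompact.measurableSet]
  have hK : U ⁻¹' (K : Set E) = K := by simp [K, U.preimage_closedBall]
  rw [hK, ← Measure.addHaarMeasure_unique μ K]

instance (t : ℕ) : (volume : Measure (EuclideanSpace ℂ (Fin t))).IsAddHaarMeasure :=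
  (EuclideanSpace.equiv (Fin t) ℂ).symm.isAddHaarMeasure_map volume

theorem lintegral_fin_prod_eq_prod {n : ℕ} {E : Type*} [MeasurableSpace E]
    {μ : Fin n → Measure E} [∀ i, SigmaFinite (μ i)]
    {f : Fin n → E → ℝ≥0∞} (hf : ∀ i, Measurable (f i)) :
    ∫⁻ x, ∏ i, f i (x i) ∂(Measure.pi μ) = ∏ i, ∫⁻ x, f i x ∂(μ i) := by
  induction n with
  | zero => simp
  | succ n ih =>
    calc
      _ = ∫⁻ x : E × (Fin n → E), f 0 x.1 * ∏ i : Fin n, f i.succ (x.2 i)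
          ∂((μ 0).prod (Measure.pi (fun i ↦ μ i.succ))) := by
        rw [← ((measurePreserving_piFinSuccAbove μ 0).symm).lintegral_comp_emb
          (MeasurableEquiv.measurableEmbedding _)]
        simp [MeasurableEquiv.piFinSuccAbove_symm_apply, Fin.prod_univ_succ]
      _ = (∫⁻ x, f 0 x ∂μ 0) * ∏ i : Fin n, ∫⁻ x, f i.succ x ∂(μ i.succ) := by
        rw [← ih (fun i : Fin n ↦ hf i.succ)]
        exact lintegral_prod_mul (hf 0).aemeasurable (Finset.measurable_prod _
          fun (i : Fin n) _ ↦ (hf i.succ).comp (measurable_pi_apply i)).aemeasurable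
      _ = ∏ i, ∫⁻ x, f i x ∂(μ i) := by rw [Fin.prod_univ_succ]

theorem MeasureTheory.Measure.pi_withDensity_fin {n : ℕ} {E : Type*} [MeasurableSpace E]
    (μ : Fin n → Measure E) [∀ i, SigmaFinite (μ i)] {f : Fin n → E → ℝ≥0∞}
    (hf : ∀ i, Measurable (f i)) [∀ i, SigmaFinite ((μ i).withDensity (f i))] :
    Measure.pi (fun i ↦ (μ i).withDensity (f i))
      = (Measure.pi μ).withDensity (fun x ↦ ∏ i, f i (x i)) := by
  refine Measure.pi_eq fun s hs ↦ ?_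
  have hbox : (Set.univ.pi s).indicator (fun x ↦ ∏ i, f i (x i))
      = fun x ↦ ∏ i, (s i).indicator (f i) (x i) := by
    ext x
    classical
    simp only [Set.indicator_apply, Finset.prod_ite_zero, Finset.mem_univ, true_implies,
      Set.mem_univ_pi]
  rw [withDensity_apply _ (.univ_pi hs), ← lintegral_indicator (.univ_pi hs), hbox,
    lintegral_fin_prod_eq_prod fun i ↦ (hf i).indicator (hs i)]
  refine Finset.prod_congr rfl fun i _ ↦ ?_
  rw [withDensity_apply _ (hs i), lintegral_indicator (hs i)]

theorem MeasureTheory.MeasurePreserving.withDensity_comp {α β : Type*} [MeasurableSpace α]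
    [MeasurableSpace β] {μ : Measure α} {ν : Measure β} {f : α → β} (hf : MeasurePreserving f μ ν)
    {g : β → ℝ≥0∞} (hg : Measurable g) :
    MeasurePreserving f (μ.withDensity (g ∘ f)) (ν.withDensity g) := by
  refine ⟨hf.measurable, Measure.ext fun s hs ↦ ?_⟩
  rw [Measure.map_apply hf.measurable hs, withDensity_apply _ (hf.measurable hs),
    withDensity_apply _ hs]
  exact hf.setLIntegral_comp_preimage hs hg

noncomputable def complexGaussianPDF (z : ℂ) : ℝ≥0∞ := ENNReal.ofReal (π⁻¹ * exp (-‖z‖ ^ 2))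

-- An `abbrev`, so that instances about it also apply to `volume.withDensity complexGaussianPDF`.
noncomputable abbrev stdComplexGaussian : Measure ℂ := volume.withDensity complexGaussianPDF

theorem measurable_complexGaussianPDF : Measurable complexGaussianPDF := by
  unfold complexGaussianPDF; fun_prop

theorem lintegral_complexGaussianPDF : ∫⁻ z, complexGaussianPDF z = 1 := by
  have hint : ∫ z : ℂ, exp (-‖z‖ ^ 2) = π := by
    simpa [Complex.finrank_real_complex] using GaussianFourier.integral_rexp_neg_mul_sq_norm
      (V := ℂ) one_pos
  have hintegrable : Integrable fun z : ℂ ↦ π⁻¹ * exp (-‖z‖ ^ 2) :=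
    (Integrable.of_integral_ne_zero (hint ▸ pi_ne_zero)).const_mul _
  simp only [complexGaussianPDF]
  rw [← ofReal_integral_eq_lintegral_ofReal hintegrable
    (Filter.Eventually.of_forall fun z ↦ by positivity), integral_const_mul, hint,
    inv_mul_cancel₀ pi_ne_zero, ENNReal.ofReal_one]

instance : IsProbabilityMeasure stdComplexGaussian :=
  ⟨by rw [stdComplexGaussian, withDensity_apply _ .univ, Measure.restrict_univ,
    lintegral_complexGaussianPDF]⟩

theorem stdComplexGaussian_setOf_norm_sq_lt_le {c : ℝ} (hc : 0 ≤ c) :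
    stdComplexGaussian {z | ‖z‖ ^ 2 < c} ≤ ENNReal.ofReal c := by
  have hball : {z : ℂ | ‖z‖ ^ 2 < c} = Metric.ball 0 √c := by
    ext z; simp [lt_sqrt (norm_nonneg z)]
  calc stdComplexGaussian {z | ‖z‖ ^ 2 < c}
      = ∫⁻ _ in Metric.ball 0 √c, complexGaussianPDF _ := by
        rw [hball, stdComplexGaussian, withDensity_apply _ measurableSet_ball]
    _ ≤ ∫⁻ _ in Metric.ball (0 : ℂ) √c, ENNReal.ofReal π⁻¹ :=
        setLIntegral_mono measurable_const fun z _ ↦ ENNReal.ofReal_le_ofReal <|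
          mul_le_of_le_one_right (by positivity) (exp_le_one_iff.2 (by simp))
    _ = ENNReal.ofReal c := by
        rw [setLIntegral_const, Complex.volume_ball, ← ENNReal.ofReal_pow (sqrt_nonneg c),
          sq_sqrt hc, mul_left_comm, ← ENNReal.ofReal_coe_nnreal, NNReal.coe_real_pi,
          ← ENNReal.ofReal_mul (by positivity), inv_mul_cancel₀ pi_ne_zero, ENNReal.ofReal_one,
          mul_one]

theorem Orthonormal.exists_orthonormalBasis_apply_eq {𝕜 E ι : Type*} [RCLike 𝕜]
    [NormedAddCommGroup E] [InnerProductSpace 𝕜 E] [FiniteDimensional 𝕜 E] [Fintype ι]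
    (hcard : Module.finrank 𝕜 E = Fintype.card ι) {x : E} (hx : ‖x‖ = 1) (i : ι) :
    ∃ b : OrthonormalBasis ι 𝕜 E, b i = x := by
  have hv : Orthonormal 𝕜 (({i} : Set ι).domRestrict fun _ ↦ x) :=
    ⟨fun _ ↦ hx, fun a b hab ↦ absurd (Subsingleton.elim a b) hab⟩
  obtain ⟨b, hb⟩ := hv.exists_orthonormalBasis_extension_of_card_eq hcard
  exact ⟨b, hb i rfl⟩

section stdCGauss

variable {t : ℕ}

theorem stdCGauss_density_eq_prod (h : EuclideanSpace ℂ (Fin t)) :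
    ENNReal.ofReal ((π ^ t)⁻¹ * exp (-‖h‖ ^ 2)) = ∏ i, complexGaussianPDF (h i) := by
  simp only [complexGaussianPDF]
  rw [← ENNReal.ofReal_prod_of_nonneg fun i _ ↦ by positivity, Finset.prod_mul_distrib,
    Finset.prod_const, Finset.card_univ, Fintype.card_fin, inv_pow, ← exp_sum,
    EuclideanSpace.norm_sq_eq, Finset.sum_neg_distrib]

theorem measurePreserving_toLp_stdCGauss :
    MeasurePreserving (MeasurableEquiv.toLp 2 (Fin t → ℂ))
      (Measure.pi fun _ ↦ stdComplexGaussian) (stdCGauss t) := by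
  have hvol : MeasurePreserving (MeasurableEquiv.toLp 2 (Fin t → ℂ)) volume volume :=
    ⟨(MeasurableEquiv.toLp 2 _).measurable, rfl⟩
  have hdens := hvol.withDensity_comp
    (g := fun h ↦ ENNReal.ofReal ((π ^ t)⁻¹ * exp (-‖h‖ ^ 2))) (by fun_prop)
  have hpi : Measure.pi (fun _ : Fin t ↦ stdComplexGaussian) = volume.withDensity
      ((fun h ↦ ENNReal.ofReal ((π ^ t)⁻¹ * exp (-‖h‖ ^ 2))) ∘ WithLp.toLp 2) := by
    rw [Measure.pi_withDensity_fin _ fun _ ↦ measurable_complexGaussianPDF, ← volume_pi]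
    congr with x
    exact (stdCGauss_density_eq_prod _).symm
  exact hpi ▸ hdens

instance : IsProbabilityMeasure (stdCGauss t) :=
  measurePreserving_toLp_stdCGauss.map_eq ▸ Measure.isProbabilityMeasure_map (by fun_prop)

theorem measurePreserving_apply_stdCGauss (i : Fin t) :
    MeasurePreserving (fun h : EuclideanSpace ℂ (Fin t) ↦ h i) (stdCGauss t) stdComplexGaussian :=
  (measurePreserving_eval _ i).comp measurePreserving_toLp_stdCGauss.symm

theorem LinearIsometryEquiv.measurePreserving_stdCGauss
    (U : EuclideanSpace ℂ (Fin t) ≃ₗᵢ[ℂ] EuclideanSpace ℂ (Fin t)) :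
    MeasurePreserving U (stdCGauss t) (stdCGauss t) := by
  have := (U.measurePreserving_of_isAddHaarMeasure volume).withDensity_comp
    (g := fun h ↦ ENNReal.ofReal ((π ^ t)⁻¹ * exp (-‖h‖ ^ 2))) (by fun_prop)
  simp only [Function.comp_def, LinearIsometryEquiv.norm_map] at this
  exact this

theorem measurePreserving_inner_stdCGauss {x : EuclideanSpace ℂ (Fin t)} (hx : ‖x‖ = 1) :
    MeasurePreserving (inner ℂ x) (stdCGauss t) stdComplexGaussian := by
  obtain ⟨i⟩ : Nonempty (Fin t) := by
    by_contra h
    rw [not_nonempty_iff] at h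
    simp [Subsingleton.elim x 0] at hx
  obtain ⟨b, hb⟩ := Orthonormal.exists_orthonormalBasis_apply_eq (𝕜 := ℂ) (by simp) hx i
  rw [← hb]
  convert (measurePreserving_apply_stdCGauss i).comp b.repr.measurePreserving_stdCGauss
  ext h
  simp [b.repr_apply_apply]

theorem stdCGauss_exists_norm_sq_inner_lt_le {B : Finset (EuclideanSpace ℂ (Fin t))}
    (hB : ∀ x ∈ B, ‖x‖ = 1) {c : ℝ} (hc : 0 ≤ c) :
    stdCGauss t {h | ∃ x ∈ B, ‖(inner ℂ x h : ℂ)‖ ^ 2 < c} ≤ B.card * ENNReal.ofReal c := by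
  have hdisc : MeasurableSet {z : ℂ | ‖z‖ ^ 2 < c} :=
    measurableSet_lt (by fun_prop) measurable_const
  calc stdCGauss t {h | ∃ x ∈ B, ‖(inner ℂ x h : ℂ)‖ ^ 2 < c}
      = stdCGauss t (⋃ x ∈ B, inner ℂ x ⁻¹' {z | ‖z‖ ^ 2 < c}) := by
        congr 1; ext h; simp
    _ ≤ ∑ x ∈ B, stdCGauss t (inner ℂ x ⁻¹' {z | ‖z‖ ^ 2 < c}) := measure_biUnion_finset_le _ _
    _ ≤ ∑ _x ∈ B, ENNReal.ofReal c := Finset.sum_le_sum fun x hx ↦ by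
        rw [(measurePreserving_inner_stdCGauss (hB x hx)).measure_preimage hdisc.nullMeasurableSet]
        exact stdComplexGaussian_setOf_norm_sq_lt_le hc
    _ = B.card * ENNReal.ofReal c := by rw [Finset.sum_const, nsmul_eq_mul]

end stdCGauss

theorem ceil_logb_two_natCast_le_logb_four_mul (n : ℕ) : (⌈logb 2 n⌉ : ℝ) ≤ logb 2 (4 * n) := by
  rcases n.eq_zero_or_pos with rfl | hn
  · simp
  have hn' : (0 : ℝ) < n := by exact_mod_cast hn
  calc (⌈logb 2 n⌉ : ℝ) ≤ logb 2 n + 1 := (Int.ceil_lt_add_one _).le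
    _ = logb 2 (2 * n) := by
        rw [logb_mul two_ne_zero hn'.ne', logb_self_eq_one one_lt_two, add_comm]
    _ ≤ logb 2 (4 * n) := logb_le_logb_of_le one_lt_two (by positivity) (by linarith)

theorem vlq_rate_bound_general (t : ℕ)
    (B : Finset (EuclideanSpace ℂ (Fin t)))
    (hBunit : ∀ x ∈ B, ‖x‖ = 1)
    (P : ℝ) (hP : 1 ≤ P) :
    (stdCGauss t {h | ∃ x ∈ B, ‖(inner ℂ x h : ℂ)‖ ^ 2 * P < ((t : ℝ) + 1) * Real.log P}ᶜ).toReal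
        * 1
      + (stdCGauss t {h | ∃ x ∈ B, ‖(inner ℂ x h : ℂ)‖ ^ 2 * P < ((t : ℝ) + 1) * Real.log P}).toReal
        * (1 + (⌈Real.logb 2 (B.card : ℝ)⌉ : ℝ))
    ≤ 1 + ((t : ℝ) + 1) * (B.card : ℝ) * Real.logb 2 (4 * (B.card : ℝ)) * Real.log P / P := by
  set c := ((t : ℝ) + 1) * log P / P
  have hc : 0 ≤ c := by have := log_nonneg hP; positivity
  have hE : {h | ∃ x ∈ B, ‖(inner ℂ x h : ℂ)‖ ^ 2 * P < ((t : ℝ) + 1) * log P}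
      = {h | ∃ x ∈ B, ‖(inner ℂ x h : ℂ)‖ ^ 2 < c} := by
    simp_rw [c, lt_div_iff₀ (by linarith : (0 : ℝ) < P)]
  rw [hE]
  set E := {h | ∃ x ∈ B, ‖(inner ℂ x h : ℂ)‖ ^ 2 < c}
  have hEmeas : MeasurableSet E := by
    have : E = ⋃ x ∈ B, {h | ‖(inner ℂ x h : ℂ)‖ ^ 2 < c} := by ext h; simp [E]
    rw [this]
    exact Finset.measurableSet_biUnion _ fun x _ ↦ measurableSet_lt (by fun_prop) measurable_const
  have hμE : (stdCGauss t E).toReal ≤ B.card * c := by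
    refine ENNReal.toReal_le_of_le_ofReal (by positivity) ?_
    rw [ENNReal.ofReal_mul (by positivity), ENNReal.ofReal_natCast]
    exact stdCGauss_exists_norm_sq_inner_lt_le hBunit hc
  have hk := ceil_logb_two_natCast_le_logb_four_mul B.card
  have hk0 : (0 : ℝ) ≤ ⌈logb 2 B.card⌉ :=
    mod_cast Int.ceil_nonneg (div_nonneg (log_natCast_nonneg _) (log_nonneg one_le_two))
  rw [prob_compl_eq_one_sub hEmeas, ENNReal.toReal_sub_of_le prob_le_one ENNReal.one_ne_top,
    ENNReal.toReal_one]
  calc (1 - (stdCGauss t E).toReal) * 1 + (stdCGauss t E).toReal * (1 + ⌈logb 2 B.card⌉)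
      = 1 + (stdCGauss t E).toReal * ⌈logb 2 B.card⌉ := by ring
    _ ≤ 1 + B.card * c * logb 2 (4 * B.card) := by gcongr
    _ = _ := by ring

/-- Proposition 1 (rate bound): the variable-length encoder feeds back 1 bit on the complement
of `E = {h : ∃ x ∈ B, |⟨x,h⟩|² P < β}` and `1 + ⌈log₂ |B|⌉` bits on `E`, giving expected rate
at most `1 + (t+1)|B| log₂(4|B|) (log P)/P`. -/
theorem vlq_rate_bound (t : ℕ) (ht : 1 ≤ t)
    (B : Finset (EuclideanSpace ℂ (Fin t))) (hB : B.Nonempty)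
    (hBunit : ∀ x ∈ B, ‖x‖ = 1)
    (P : ℝ) (hP : 1 ≤ P) :
    (stdCGauss t {h | ∃ x ∈ B, ‖(inner ℂ x h : ℂ)‖ ^ 2 * P < ((t : ℝ) + 1) * Real.log P}ᶜ).toReal
        * 1
      + (stdCGauss t {h | ∃ x ∈ B, ‖(inner ℂ x h : ℂ)‖ ^ 2 * P < ((t : ℝ) + 1) * Real.log P}).toReal
        * (1 + (⌈Real.logb 2 (B.card : ℝ)⌉ : ℝ))
    ≤ 1 + ((t : ℝ) + 1) * (B.card : ℝ) * Real.logb 2 (4 * (B.card : ℝ)) * Real.log P / P :=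
  vlq_rate_bound_general t B hBunit P hP
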